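/- arXiv:2602.12807 — 3 statements merged into one kernel-verified Lean document; each statement's English description precedes it below -/
import Mathlib

section
/- If the control problem has the approximation property at a point x ∈ Σ, then Γ^{opt}[x] has the closed graph property: for every sequence x_n ∈ Σ with x_n → x and every sequence of optimal trajectories (y_n,α_n) ∈ Γ^{opt}[x_n] such that y_n converges uniformly on [0,T] to a curve y, there exists a measurable α such that (y,α) ∈ Γ^{opt}[x]. -/
open MeasureTheory Set Filter Topology

noncomputable section

/-- Squared Euclidean norm on ℝ². -/
def sq2 (v : ℝ × ℝ) : ℝ := v.1 ^ 2 + v.2 ^ 2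

/-- Euclidean norm on ℝ². -/
def enorm2 (v : ℝ × ℝ) : ℝ := Real.sqrt (sq2 v)

/-- `(y, α)` is an admissible trajectory for the Grushin-type dynamics on `[t,T]`,
starting from `x` and constrained to the set `S`:  `y ∈ W^{1,1}`, `α` measurable,
`y₁' = α₁`, `y₂' = |y₁|^ν α₂` a.e. (in integral form), `y(t) = x`, `y(s) ∈ S`. -/
def Admissible (ν : ℝ) (S : Set (ℝ × ℝ)) (t T : ℝ) (x : ℝ × ℝ)
    (y α : ℝ → ℝ × ℝ) : Prop :=
  Measurable α ∧
  IntervalIntegrable (fun τ => (α τ).1) volume t T ∧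
  IntervalIntegrable (fun τ => |(y τ).1| ^ ν * (α τ).2) volume t T ∧
  (∀ s ∈ Icc t T, (y s).1 = x.1 + ∫ τ in t..s, (α τ).1) ∧
  (∀ s ∈ Icc t T, (y s).2 = x.2 + ∫ τ in t..s, |(y τ).1| ^ ν * (α τ).2) ∧
  (∀ s ∈ Icc t T, y s ∈ S)

/-- `α ∈ L²(t,T)`. -/
def InL2 (α : ℝ → ℝ × ℝ) (t T : ℝ) : Prop :=
  IntervalIntegrable (fun τ => sq2 (α τ)) volume t T

/-- The cost `J_t(x;(y,α))`. -/
def cost (l : ℝ × ℝ → ℝ → ℝ) (g : ℝ × ℝ → ℝ) (t T : ℝ) (y α : ℝ → ℝ × ℝ) : ℝ :=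
  (∫ τ in t..T, (sq2 (α τ) / 2 + l (y τ) τ)) + g (y T)

/-- `Γ_t[x]`: admissible trajectories from `(x,t)` with finite cost (`α ∈ L²`). -/
def Gamma (ν : ℝ) (S : Set (ℝ × ℝ)) (t T : ℝ) (x : ℝ × ℝ) :
    Set ((ℝ → ℝ × ℝ) × (ℝ → ℝ × ℝ)) :=
  {p | Admissible ν S t T x p.1 p.2 ∧ InL2 p.2 t T}

/-- `Γ_t^{opt}[x]`: optimal trajectories. -/
def GammaOpt (ν : ℝ) (S : Set (ℝ × ℝ)) (l : ℝ × ℝ → ℝ → ℝ) (g : ℝ × ℝ → ℝ)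
    (t T : ℝ) (x : ℝ × ℝ) : Set ((ℝ → ℝ × ℝ) × (ℝ → ℝ × ℝ)) :=
  {p | p ∈ Gamma ν S t T x ∧
    ∀ q ∈ Gamma ν S t T x, cost l g t T p.1 p.2 ≤ cost l g t T q.1 q.2}

/-- The value function `u(x,t)`. -/
def valueFun (ν : ℝ) (S : Set (ℝ × ℝ)) (l : ℝ × ℝ → ℝ → ℝ) (g : ℝ × ℝ → ℝ)
    (T : ℝ) (x : ℝ × ℝ) (t : ℝ) : ℝ :=
  sInf ((fun p => cost l g t T p.1 p.2) '' Gamma ν S t T x)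

/-- Closed graph property of `Γ_t^{opt}[x]`. -/
def ClosedGraphAt (ν : ℝ) (S : Set (ℝ × ℝ)) (l : ℝ × ℝ → ℝ → ℝ) (g : ℝ × ℝ → ℝ)
    (t T : ℝ) (x : ℝ × ℝ) : Prop :=
  ∀ (xs : ℕ → ℝ × ℝ) (ys as : ℕ → ℝ → ℝ × ℝ) (y : ℝ → ℝ × ℝ),
    (∀ n, xs n ∈ S) → Tendsto xs atTop (𝓝 x) →
    (∀ n, (ys n, as n) ∈ GammaOpt ν S l g t T (xs n)) →
    TendstoUniformlyOn ys y atTop (Icc t T) →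
    ∃ α, (y, α) ∈ GammaOpt ν S l g t T x

/-- Approximation property at `x` for initial time `t`. -/
def ApproxProperty (ν : ℝ) (S : Set (ℝ × ℝ)) (l : ℝ × ℝ → ℝ → ℝ) (g : ℝ × ℝ → ℝ)
    (t T : ℝ) (x : ℝ × ℝ) : Prop :=
  ∀ y α, (y, α) ∈ Gamma ν S t T x →
    ∀ xs : ℕ → ℝ × ℝ, (∀ n, xs n ∈ S) → Tendsto xs atTop (𝓝 x) →
      ∃ ys as : ℕ → ℝ → ℝ × ℝ,
        (∀ n, (ys n, as n) ∈ Gamma ν S t T (xs n)) ∧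
        TendstoUniformlyOn ys y atTop (Icc t T) ∧
        Tendsto (fun n => (∫ τ in t..T, sq2 (as n τ)) - ∫ τ in t..T, sq2 (α τ))
          atTop (𝓝 0) ∧
        Tendsto (fun n => cost l g t T (ys n) (as n)) atTop (𝓝 (cost l g t T y α))

/-- The point `x` is unreachable: no admissible trajectory with finite cost,
starting from another point of `S`, reaches `x` at time `T`. -/
def Unreachable (ν : ℝ) (S : Set (ℝ × ℝ)) (T : ℝ) (x : ℝ × ℝ) : Prop :=
  ∀ xb ∈ S \ {x}, ¬ ∃ p ∈ Gamma ν S 0 T xb, p.1 T = x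

/-- Reachability property of the dynamics at `x`. -/
def ReachProperty (ν : ℝ) (S : Set (ℝ × ℝ)) (T : ℝ) (x : ℝ × ℝ) : Prop :=
  ∀ xs : ℕ → ℝ × ℝ, (∀ n, xs n ∈ S) → Tendsto xs atTop (𝓝 x) →
    ∃ (δ : ℕ → ℝ) (ys as : ℕ → ℝ → ℝ × ℝ),
      (∀ n, δ n ∈ Icc 0 T) ∧
      (∀ n, Admissible ν S 0 (δ n) (xs n) (ys n) (as n) ∧ InL2 (as n) 0 (δ n) ∧
        ys n (δ n) = x) ∧
      Tendsto (fun n => ∫ τ in (0:ℝ)..(δ n), sq2 (as n τ)) atTop (𝓝 0) ∧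
      Tendsto δ atTop (𝓝 0)

/-- `x₁`-convexity of a subset of the plane. -/
def X1Convex (A : Set (ℝ × ℝ)) : Prop :=
  ∀ a b h : ℝ, (a, b) ∈ A → 0 < h → (a + h, b) ∈ A →
    ∀ t ∈ Icc (0:ℝ) 1, (a + t * h, b) ∈ A

/-- Hypothesis (H1). -/
def HypH1 (S : Set (ℝ × ℝ)) : Prop :=
  ∀ x0 ∈ frontier S, x0.1 ≠ 0 →
    ∃ R > 0, X1Convex (S ∩ Metric.ball x0 R) ∧
      ((S ∩ Metric.ball x0 R ∩ {p | x0.2 < p.2}).Nonempty →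
        ∃ C > 0,
          {p : ℝ × ℝ | p.1 = x0.1 ∧ p.2 ∈ Ioc x0.2 (x0.2 + R)} ⊆ S ∨
          {p : ℝ × ℝ | p.1 ∈ Ioc x0.1 (x0.1 + R) ∧ p.2 = x0.2 + C * (p.1 - x0.1)} ⊆ S ∨
          {p : ℝ × ℝ | p.1 ∈ Ico (x0.1 - R) x0.1 ∧ p.2 = x0.2 + C * (x0.1 - p.1)} ⊆ S) ∧
      ((S ∩ Metric.ball x0 R ∩ {p | p.2 < x0.2}).Nonempty →
        ∃ C > 0,
          {p : ℝ × ℝ | p.1 = x0.1 ∧ p.2 ∈ Ico (x0.2 - R) x0.2} ⊆ S ∨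
          {p : ℝ × ℝ | p.1 ∈ Ioc x0.1 (x0.1 + R) ∧ p.2 = x0.2 - C * (p.1 - x0.1)} ⊆ S ∨
          {p : ℝ × ℝ | p.1 ∈ Ico (x0.1 - R) x0.1 ∧ p.2 = x0.2 - C * (x0.1 - p.1)} ⊆ S)

/-- Hypothesis (H2). -/
def HypH2 (ν : ℝ) (S : Set (ℝ × ℝ)) : Prop :=
  ∀ x0 ∈ frontier S, x0.1 = 0 →
    ∃ R > 0, X1Convex (S ∩ Metric.ball x0 R) ∧
      ((S ∩ Metric.ball x0 R ∩ {p | x0.2 < p.2}).Nonempty →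
        ∃ C > 0,
          {p : ℝ × ℝ | p.1 ∈ Ioc 0 R ∧ p.2 = x0.2 + C * p.1 ^ (ν + 1)} ⊆ S ∨
          {p : ℝ × ℝ | p.1 ∈ Ico (-R) 0 ∧ p.2 = x0.2 + C * (-p.1) ^ (ν + 1)} ⊆ S) ∧
      ((S ∩ Metric.ball x0 R ∩ {p | p.2 < x0.2}).Nonempty →
        ∃ C > 0,
          {p : ℝ × ℝ | p.1 ∈ Ioc 0 R ∧ p.2 = x0.2 - C * p.1 ^ (ν + 1)} ⊆ S ∨
          {p : ℝ × ℝ | p.1 ∈ Ico (-R) 0 ∧ p.2 = x0.2 - C * (-p.1) ^ (ν + 1)} ⊆ S)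

/-!
Optimality against the constant trajectory bounds the energies `∫ |αₙ|²` uniformly, so along a
subsequence the `L²(0,T)` norms of both control components converge. Because `yₙ → y` uniformly,
the pairings of the components with `1_{(0,s]}` and with `1_{(0,s]} |y₁|^ν` converge to
`y₁(s) - x₁` and `y₂(s) - x₂`. The limit functional on the span of these test functions is
bounded by the limit norm; extended by Hahn–Banach and represented by Riesz, it gives a control
`α` for the limit curve `y` whose energy is at most the limit energy. Hence, for every
`q ∈ Γ[x]` with approximations `qₙ ∈ Γ[xₙ]`, along that subsequence
`J(x; (y, α)) ≤ lim J(xₙ; (yₙ, αₙ)) ≤ lim J(xₙ; qₙ) = J(x; q)`.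
-/

open scoped InnerProductSpace

theorem exists_norm_le_forall_inner_eq {H ι : Type*} [NormedAddCommGroup H]
    [InnerProductSpace ℝ H] [CompleteSpace H] {v : ℕ → H} {M : ℝ}
    (hv : Tendsto (fun n => ‖v n‖) atTop (𝓝 M)) (Φ : ι → H) (c : ι → ℝ)
    (hc : ∀ i, Tendsto (fun n => ⟪Φ i, v n⟫_ℝ) atTop (𝓝 (c i))) :
    ∃ w : H, ‖w‖ ≤ M ∧ ∀ i, ⟪Φ i, w⟫_ℝ = c i := by
  set p := Submodule.span ℝ (range Φ)
  have hlim (φ : p) : ∃ r, Tendsto (fun n => ⟪(φ : H), v n⟫_ℝ) atTop (𝓝 r) := by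
    obtain ⟨φ, hφ⟩ := φ
    induction hφ using Submodule.span_induction with
    | mem _ h => obtain ⟨i, rfl⟩ := h; exact ⟨c i, hc i⟩
    | zero => exact ⟨0, by simp⟩
    | add φ ψ _ _ hφ hψ =>
      obtain ⟨r, hr⟩ := hφ
      obtain ⟨s, hs⟩ := hψ
      exact ⟨r + s, by simpa only [inner_add_left] using hr.add hs⟩
    | smul a φ _ hφ =>
      obtain ⟨r, hr⟩ := hφ
      exact ⟨a * r, by simpa only [real_inner_smul_left] using hr.const_mul a⟩
  choose f hf using hlim
  have hM : 0 ≤ M := ge_of_tendsto' hv fun n => norm_nonneg _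
  obtain ⟨C, hC⟩ := hv.bddAbove_range
  have hC0 : 0 ≤ C := (norm_nonneg _).trans (hC ⟨0, rfl⟩)
  let G : ℕ → StrongDual ℝ p := fun n => (innerSL ℝ (v n)).comp p.subtypeL
  have hG : Bornology.IsBounded (range G) := by
    refine isBounded_iff_forall_norm_le.2 ⟨C, ?_⟩
    rintro _ ⟨n, rfl⟩
    refine (G n).opNorm_le_bound hC0 fun φ => ?_
    exact (norm_inner_le_norm _ _).trans
      (mul_le_mul_of_nonneg_right (hC ⟨n, rfl⟩) (norm_nonneg _))
  have hGf : Tendsto (fun n φ => G n φ) atTop (𝓝 f) :=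
    tendsto_pi_nhds.2 fun φ => by simpa [G, real_inner_comm] using hf φ
  let F := ContinuousLinearMap.ofTendstoOfBoundedRange f G hGf hG
  have hF : ‖F‖ ≤ M := F.opNorm_le_bound hM fun φ =>
    le_of_tendsto_of_tendsto' (hf φ).norm (hv.mul_const ‖φ‖) fun n => by
      rw [mul_comm]; exact norm_inner_le_norm _ _
  obtain ⟨g, hgF, hg⟩ := exists_extension_norm_eq p F
  refine ⟨(InnerProductSpace.toDual ℝ H).symm g, by simpa [hg] using hF, fun i => ?_⟩
  rw [real_inner_comm, InnerProductSpace.toDual_symm_apply]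
  exact (hgF ⟨Φ i, Submodule.subset_span (mem_range_self i)⟩).trans
    (tendsto_nhds_unique (hf _) (hc i))

theorem MeasureTheory.L2.inner_toLp_indicator {α : Type*} [MeasurableSpace α] {μ : Measure α}
    {s : Set α} (hs : MeasurableSet s) {f g : α → ℝ} (hf : MemLp (s.indicator f) 2 μ)
    {u : Lp ℝ 2 μ} (hu : u =ᵐ[μ] g) : ⟪hf.toLp _, u⟫_ℝ = ∫ x in s, f x * g x ∂μ := by
  rw [L2.inner_def, ← integral_indicator hs]
  refine integral_congr_ae ?_
  filter_upwards [hf.coeFn_toLp, hu] with x hfx hux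
  rw [hfx, hux]
  by_cases hx : x ∈ s <;> simp [hx, mul_comm]

theorem MeasureTheory.L2.norm_sq_eq_integral {α : Type*} [MeasurableSpace α] {μ : Measure α}
    {u : Lp ℝ 2 μ} {g : α → ℝ} (hu : u =ᵐ[μ] g) : ‖u‖ ^ 2 = ∫ x, g x ^ 2 ∂μ := by
  rw [← real_inner_self_eq_norm_sq, L2.inner_def]
  refine integral_congr_ae ?_
  filter_upwards [hu] with x hux
  simp [hux, sq]

theorem setIntegral_restrict_Ioc_eq_intervalIntegral {f : ℝ → ℝ} {a s T : ℝ} (has : a ≤ s)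
    (hsT : s ≤ T) : ∫ τ in Ioc a s, f τ ∂(volume.restrict (Ioc a T)) = ∫ τ in a..s, f τ := by
  rw [Measure.restrict_restrict measurableSet_Ioc, Ioc_inter_Ioc, max_self, min_eq_left hsT,
    intervalIntegral.integral_of_le has]

theorem ContinuousOn.memLp_restrict_Ioc {f : ℝ → ℝ} {a b : ℝ} (hf : ContinuousOn f (Icc a b))
    (p : ENNReal) : MemLp f p (volume.restrict (Ioc a b)) := by
  obtain ⟨C, hC⟩ := isCompact_Icc.exists_bound_of_continuousOn hf
  refine MemLp.of_bound ((hf.mono Ioc_subset_Icc_self).aestronglyMeasurable measurableSet_Ioc) C ?_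
  exact (ae_restrict_iff' measurableSet_Ioc).2
    (.of_forall fun x hx => hC x (Ioc_subset_Icc_self hx))

theorem ContinuousOn.memLp_abs_fst_rpow {ν a b : ℝ} {y : ℝ → ℝ × ℝ} (hν : 0 ≤ ν)
    (hy : ContinuousOn y (Icc a b)) :
    MemLp (fun τ => |(y τ).1| ^ ν) 2 (volume.restrict (Ioc a b)) :=
  ((Real.continuous_rpow_const hν).comp continuous_abs).comp_continuousOn
    (continuous_fst.comp_continuousOn hy) |>.memLp_restrict_Ioc 2

theorem exists_memLp_intervalIntegral_mul_eq {T E : ℝ} (hT : 0 ≤ T) {u : ℕ → ℝ → ℝ}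
    {w c : ℝ → ℝ} (hu : ∀ n, MemLp (u n) 2 (volume.restrict (Ioc 0 T)))
    (hE : Tendsto (fun n => ∫ τ in (0:ℝ)..T, u n τ ^ 2) atTop (𝓝 E))
    (hw : MemLp w 2 (volume.restrict (Ioc 0 T)))
    (hc : ∀ s ∈ Icc 0 T, Tendsto (fun n => ∫ τ in (0:ℝ)..s, w τ * u n τ) atTop (𝓝 (c s))) :
    ∃ m : ℝ → ℝ, Measurable m ∧ MemLp m 2 (volume.restrict (Ioc 0 T)) ∧
      ∫ τ in (0:ℝ)..T, m τ ^ 2 ≤ E ∧ ∀ s ∈ Icc 0 T, ∫ τ in (0:ℝ)..s, w τ * m τ = c s := by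
  set μ := volume.restrict (Ioc (0:ℝ) T)
  let Φ (s : Icc 0 T) : Lp ℝ 2 μ := (hw.indicator (s := Ioc 0 (s : ℝ)) measurableSet_Ioc).toLp _
  have hΦ (s : Icc 0 T) {W : Lp ℝ 2 μ} {m : ℝ → ℝ} (hW : W =ᵐ[μ] m) :
      ⟪Φ s, W⟫_ℝ = ∫ τ in (0:ℝ)..s, w τ * m τ := by
    rw [L2.inner_toLp_indicator measurableSet_Ioc _ hW,
      setIntegral_restrict_Ioc_eq_intervalIntegral s.2.1 s.2.2]
  have hnorm (n : ℕ) : ‖(hu n).toLp‖ = √(∫ τ in (0:ℝ)..T, u n τ ^ 2) := by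
    rw [intervalIntegral.integral_of_le hT, ← L2.norm_sq_eq_integral (hu n).coeFn_toLp,
      Real.sqrt_sq (norm_nonneg _)]
  obtain ⟨W, hWE, hWc⟩ := exists_norm_le_forall_inner_eq (v := fun n => (hu n).toLp)
    (by simpa only [hnorm] using hE.sqrt) Φ (fun s => c s)
    (fun s => by simpa only [hΦ s (hu _).coeFn_toLp] using hc s s.2)
  have hW := Lp.aestronglyMeasurable W
  have hE0 : 0 ≤ E := ge_of_tendsto' hE fun n =>
    intervalIntegral.integral_nonneg hT fun τ _ => sq_nonneg _
  refine ⟨hW.mk W, hW.stronglyMeasurable_mk.measurable, (Lp.memLp W).ae_eq hW.ae_eq_mk, ?_,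
    fun s hs => (hΦ ⟨s, hs⟩ hW.ae_eq_mk).symm.trans (hWc ⟨s, hs⟩)⟩
  calc ∫ τ in (0:ℝ)..T, hW.mk W τ ^ 2 = ‖W‖ ^ 2 := by
        rw [intervalIntegral.integral_of_le hT, L2.norm_sq_eq_integral hW.ae_eq_mk]
    _ ≤ √E ^ 2 := by gcongr
    _ = E := Real.sq_sqrt hE0

theorem tendsto_setIntegral_sub_mul_of_tendstoUniformlyOn {α : Type*} [MeasurableSpace α]
    {μ : Measure α} [IsFiniteMeasure μ] {s : Set α} (hs : MeasurableSet s) {F : ℕ → α → ℝ}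
    {f : α → ℝ} {u : ℕ → α → ℝ} {B : ℝ} (hF : TendstoUniformlyOn F f atTop s)
    (hu : ∀ n, Integrable (fun x => u n x ^ 2) μ) (hB : ∀ n, ∫ x, u n x ^ 2 ∂μ ≤ B) :
    Tendsto (fun n => ∫ x in s, (F n x - f x) * u n x ∂μ) atTop (𝓝 0) := by
  rw [Metric.tendsto_nhds]
  intro ε hε
  set K := μ.real univ + |B| + 1
  have hK : 0 < K := by positivity
  filter_upwards [Metric.tendstoUniformlyOn_iff.1 hF (ε / K) (by positivity)] with n hn
  have hbound : Integrable (fun x => ε / K * (1 + u n x ^ 2)) μ :=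
    ((integrable_const 1).add (hu n)).const_mul _
  -- `|a| ≤ 1 + a ^ 2` turns the `L²` bound into the `L¹` bound needed here
  have hpt : ∀ x ∈ s, ‖(F n x - f x) * u n x‖ ≤ ε / K * (1 + u n x ^ 2) := fun x hx => by
    rw [norm_mul, Real.norm_eq_abs, Real.norm_eq_abs, abs_sub_comm]
    have := hn x hx
    rw [Real.dist_eq] at this
    gcongr
    nlinarith [abs_nonneg (u n x), sq_abs (u n x)]
  rw [dist_zero_right]
  calc ‖∫ x in s, (F n x - f x) * u n x ∂μ‖ ≤ ∫ x in s, ε / K * (1 + u n x ^ 2) ∂μ :=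
        norm_integral_le_of_norm_le hbound.integrableOn (ae_restrict_of_forall_mem hs hpt)
    _ ≤ ∫ x, ε / K * (1 + u n x ^ 2) ∂μ :=
        setIntegral_le_integral hbound (.of_forall fun x => by positivity)
    _ = ε / K * (μ.real univ + ∫ x, u n x ^ 2 ∂μ) := by
        rw [integral_const_mul, integral_add (integrable_const 1) (hu n), integral_const,
          smul_eq_mul, mul_one]
    _ < ε := by
        rw [div_mul_eq_mul_div, div_lt_iff₀ hK]
        have := le_abs_self B
        nlinarith [hB n]

theorem TendstoUniformlyOn.prodMk_id {ι α β : Type*} [PseudoMetricSpace α]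
    [PseudoMetricSpace β] {F : ι → α → β} {f : α → β} {p : Filter ι} {s : Set α}
    (h : TendstoUniformlyOn F f p s) :
    TendstoUniformlyOn (fun i a => (F i a, a)) (fun a => (f a, a)) p s := by
  rw [Metric.tendstoUniformlyOn_iff] at h ⊢
  intro ε hε
  filter_upwards [h ε hε] with n hn a ha
  simpa [Prod.dist_eq] using hn a ha

section GrushinControl

variable {ν t T : ℝ} {S : Set (ℝ × ℝ)} {l : ℝ × ℝ → ℝ → ℝ} {g : ℝ × ℝ → ℝ} {x : ℝ × ℝ}
  {y α : ℝ → ℝ × ℝ}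

theorem Admissible.continuousOn (h : Admissible ν S t T x y α) (htT : t ≤ T) :
    ContinuousOn y (Icc t T) := by
  have hprim {f : ℝ → ℝ} (hf : IntervalIntegrable f volume t T) :
      ContinuousOn (fun s => ∫ τ in t..s, f τ) (Icc t T) := by
    simpa only [uIcc_of_le htT] using
      intervalIntegral.continuousOn_primitive_interval' hf left_mem_uIcc
  exact ((continuousOn_const.add (hprim h.2.1)).prodMk
    (continuousOn_const.add (hprim h.2.2.1))).congr
      fun s hs => Prod.ext (h.2.2.2.1 s hs) (h.2.2.2.2.1 s hs)

theorem InL2.memLp_fst (hα : Measurable α) (h : InL2 α t T) :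
    MemLp (fun τ => (α τ).1) 2 (volume.restrict (Ioc t T)) := by
  refine (memLp_two_iff_integrable_sq hα.fst.aestronglyMeasurable).2 <|
    h.1.mono' (hα.fst.pow_const 2).aestronglyMeasurable (.of_forall fun τ => ?_)
  simp only [sq2, Real.norm_eq_abs, abs_pow, sq_abs]
  nlinarith [sq_nonneg (α τ).2]

theorem InL2.memLp_snd (hα : Measurable α) (h : InL2 α t T) :
    MemLp (fun τ => (α τ).2) 2 (volume.restrict (Ioc t T)) := by
  refine (memLp_two_iff_integrable_sq hα.snd.aestronglyMeasurable).2 <|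
    h.1.mono' (hα.snd.pow_const 2).aestronglyMeasurable (.of_forall fun τ => ?_)
  simp only [sq2, Real.norm_eq_abs, abs_pow, sq_abs]
  nlinarith [sq_nonneg (α τ).1]

theorem intervalIntegral_sq2_eq_add (htT : t ≤ T) {f₁ f₂ : ℝ → ℝ}
    (h₁ : MemLp f₁ 2 (volume.restrict (Ioc t T))) (h₂ : MemLp f₂ 2 (volume.restrict (Ioc t T))) :
    ∫ τ in t..T, sq2 (f₁ τ, f₂ τ) = (∫ τ in t..T, f₁ τ ^ 2) + ∫ τ in t..T, f₂ τ ^ 2 :=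
  intervalIntegral.integral_add
    ((intervalIntegrable_iff_integrableOn_Ioc_of_le htT).2 h₁.integrable_sq)
    ((intervalIntegrable_iff_integrableOn_Ioc_of_le htT).2 h₂.integrable_sq)

theorem const_mem_Gamma (hx : x ∈ S) :
    ((fun _ => x, fun _ => 0) : (ℝ → ℝ × ℝ) × (ℝ → ℝ × ℝ)) ∈ Gamma ν S t T x :=
  ⟨⟨measurable_const, by simp, by simp, by simp, by simp, fun _ _ => hx⟩, by simp [InL2, sq2]⟩

theorem cost_eq (hα : InL2 α t T) (hl : IntervalIntegrable (fun τ => l (y τ) τ) volume t T) :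
    cost l g t T y α = (∫ τ in t..T, sq2 (α τ)) / 2 + (∫ τ in t..T, l (y τ) τ) + g (y T) := by
  rw [cost, intervalIntegral.integral_add (hα.div_const 2) hl, intervalIntegral.integral_div]

theorem continuousOn_running_cost
    (hl : ContinuousOn (fun q : (ℝ × ℝ) × ℝ => l q.1 q.2) (S ×ˢ Icc t T))
    (hy : ContinuousOn y (Icc t T)) (hyS : ∀ s ∈ Icc t T, y s ∈ S) :
    ContinuousOn (fun τ => l (y τ) τ) (Icc t T) :=
  hl.comp (hy.prodMk continuousOn_id) fun τ hτ => ⟨hyS τ hτ, hτ⟩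

theorem GammaOpt.integral_sq2_le {Cl Cg : ℝ} {p : (ℝ → ℝ × ℝ) × (ℝ → ℝ × ℝ)} (htT : t ≤ T)
    (hl : ContinuousOn (fun q : (ℝ × ℝ) × ℝ => l q.1 q.2) (S ×ˢ Icc t T))
    (hlC : ∀ q ∈ S ×ˢ Icc t T, ‖l q.1 q.2‖ ≤ Cl) (hgC : ∀ z ∈ S, ‖g z‖ ≤ Cg) (hx : x ∈ S)
    (hp : p ∈ GammaOpt ν S l g t T x) :
    ∫ τ in t..T, sq2 (p.2 τ) ≤ 4 * (Cl * (T - t) + Cg) := by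
  obtain ⟨⟨hadm, hL2⟩, hmin⟩ := hp
  have hyS := hadm.2.2.2.2.2
  have hlbound {z : ℝ → ℝ × ℝ} (hz : ∀ s ∈ Icc t T, z s ∈ S) :
      |∫ τ in t..T, l (z τ) τ| ≤ Cl * (T - t) := by
    have := intervalIntegral.norm_integral_le_of_norm_le_const fun τ hτ =>
      have hτ' : τ ∈ Icc t T := by rw [← uIcc_of_le htT]; exact uIoc_subset_uIcc hτ
      hlC (z τ, τ) ⟨hz τ hτ', hτ'⟩
    rwa [Real.norm_eq_abs, abs_of_nonneg (sub_nonneg.2 htT)] at this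
  have hcmp := hmin _ (const_mem_Gamma hx)
  rw [cost_eq hL2
      ((continuousOn_running_cost hl (hadm.continuousOn htT) hyS).intervalIntegrable_of_Icc htT),
    cost_eq (const_mem_Gamma (ν := ν) hx).2
      ((continuousOn_running_cost hl continuousOn_const fun _ _ => hx).intervalIntegrable_of_Icc
        htT)] at hcmp
  have hsq0 : sq2 0 = 0 := by simp [sq2]
  simp only [hsq0, intervalIntegral.integral_zero, zero_div, zero_add] at hcmp
  linarith [abs_le.1 (hlbound hyS), abs_le.1 (hlbound fun _ _ => hx),
    abs_le.1 (hgC _ (hyS T ⟨htT, le_rfl⟩)), abs_le.1 (hgC x hx)]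

end GrushinControl

section LimitTrajectory

variable {ν T B : ℝ} {S : Set (ℝ × ℝ)} {x : ℝ × ℝ} {xs : ℕ → ℝ × ℝ} {ys as : ℕ → ℝ → ℝ × ℝ}
  {y : ℝ → ℝ × ℝ}

theorem tendsto_intervalIntegral_control_fst (hxs : Tendsto xs atTop (𝓝 x))
    (hadm : ∀ n, Admissible ν S 0 T (xs n) (ys n) (as n))
    (hy : TendstoUniformlyOn ys y atTop (Icc 0 T)) {s : ℝ} (hs : s ∈ Icc 0 T) :
    Tendsto (fun n => ∫ τ in (0:ℝ)..s, (as n τ).1) atTop (𝓝 ((y s).1 - x.1)) :=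
  ((hy.tendsto_at hs).fst_nhds.sub hxs.fst_nhds).congr fun n => by
    rw [(hadm n).2.2.2.1 s hs]; ring

theorem tendsto_intervalIntegral_weight_mul_control_snd (hν : 0 ≤ ν) (hS : IsCompact S)
    (hxs : Tendsto xs atTop (𝓝 x)) (hΓ : ∀ n, (ys n, as n) ∈ Gamma ν S 0 T (xs n))
    (hy : TendstoUniformlyOn ys y atTop (Icc 0 T)) (hyc : ContinuousOn y (Icc 0 T))
    (hyS : ∀ s ∈ Icc 0 T, y s ∈ S) (hB : ∀ n, ∫ τ in (0:ℝ)..T, sq2 (as n τ) ≤ B) {s : ℝ}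
    (hs : s ∈ Icc 0 T) :
    Tendsto (fun n => ∫ τ in (0:ℝ)..s, |(y τ).1| ^ ν * (as n τ).2) atTop
      (𝓝 ((y s).2 - x.2)) := by
  set μ := volume.restrict (Ioc (0:ℝ) T)
  have hT : 0 ≤ T := hs.1.trans hs.2
  have hsub : uIcc 0 s ⊆ uIcc 0 T := uIcc_subset_uIcc left_mem_uIcc (by rwa [uIcc_of_le hT])
  have hweight : TendstoUniformlyOn (fun n τ => |(ys n τ).1| ^ ν) (fun τ => |(y τ).1| ^ ν)
      atTop (Icc 0 T) :=
    UniformContinuousOn.comp_tendstoUniformlyOn_eventually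
      (.of_forall fun n => (hΓ n).1.2.2.2.2.2) hyS
      (hS.uniformContinuousOn_of_continuous
        ((Real.continuous_rpow_const hν).comp (continuous_abs.comp continuous_fst)).continuousOn)
      hy
  have hsnd (n : ℕ) := InL2.memLp_snd (hΓ n).1.1 (hΓ n).2
  have hsq (n : ℕ) : ∫ τ, (as n τ).2 ^ 2 ∂μ ≤ B :=
    calc ∫ τ, (as n τ).2 ^ 2 ∂μ ≤ ∫ τ, sq2 (as n τ) ∂μ :=
          integral_mono (hsnd n).integrable_sq (hΓ n).2.1 fun τ => by
            simp only [sq2]; nlinarith [sq_nonneg (as n τ).1]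
      _ = ∫ τ in (0:ℝ)..T, sq2 (as n τ) := (intervalIntegral.integral_of_le hT).symm
      _ ≤ B := hB n
  have hdiff := tendsto_setIntegral_sub_mul_of_tendstoUniformlyOn (μ := μ) measurableSet_Ioc
    (hweight.mono (Ioc_subset_Icc_self.trans (Icc_subset_Icc_right hs.2)))
    (fun n => (hsnd n).integrable_sq) hsq
  have hlim := ((hy.tendsto_at hs).snd_nhds.sub hxs.snd_nhds).sub hdiff
  rw [sub_zero] at hlim
  refine hlim.congr fun n => ?_
  have hwa : IntervalIntegrable (fun τ => |(y τ).1| ^ ν * (as n τ).2) volume 0 s :=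
    ((intervalIntegrable_iff_integrableOn_Ioc_of_le hT).2
      ((hyc.memLp_abs_fst_rpow hν).integrable_mul (hsnd n))).mono_set hsub
  rw [(hΓ n).1.2.2.2.2.1 s hs, setIntegral_restrict_Ioc_eq_intervalIntegral hs.1 hs.2]
  simp only [sub_mul]
  rw [intervalIntegral.integral_sub ((hΓ n).1.2.2.1.mono_set hsub) hwa]
  ring

theorem exists_mem_Gamma_of_tendstoUniformlyOn (hT : 0 ≤ T) (hν : 0 ≤ ν) (hS : IsCompact S)
    (hxs : Tendsto xs atTop (𝓝 x)) (hΓ : ∀ n, (ys n, as n) ∈ Gamma ν S 0 T (xs n))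
    (hy : TendstoUniformlyOn ys y atTop (Icc 0 T)) (hyc : ContinuousOn y (Icc 0 T))
    (hyS : ∀ s ∈ Icc 0 T, y s ∈ S) (hB : ∀ n, ∫ τ in (0:ℝ)..T, sq2 (as n τ) ≤ B) :
    ∃ α : ℝ → ℝ × ℝ, ∃ φ : ℕ → ℕ, ∃ E : ℝ, StrictMono φ ∧ (y, α) ∈ Gamma ν S 0 T x ∧
      Tendsto (fun k => ∫ τ in (0:ℝ)..T, sq2 (as (φ k) τ)) atTop (𝓝 E) ∧
      ∫ τ in (0:ℝ)..T, sq2 (α τ) ≤ E := by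
  have hfst (n : ℕ) := InL2.memLp_fst (hΓ n).1.1 (hΓ n).2
  have hsnd (n : ℕ) := InL2.memLp_snd (hΓ n).1.1 (hΓ n).2
  set e : ℕ → ℝ × ℝ :=
    fun n => (∫ τ in (0:ℝ)..T, (as n τ).1 ^ 2, ∫ τ in (0:ℝ)..T, (as n τ).2 ^ 2)
  have he (n : ℕ) : e n ∈ Icc 0 (B, B) := by
    have h₁ := intervalIntegral.integral_nonneg (μ := volume) hT fun τ _ => sq_nonneg (as n τ).1
    have h₂ := intervalIntegral.integral_nonneg (μ := volume) hT fun τ _ => sq_nonneg (as n τ).2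
    have := (intervalIntegral_sq2_eq_add hT (hfst n) (hsnd n)).symm.trans_le (hB n)
    exact ⟨⟨h₁, h₂⟩, ⟨by linarith, by linarith⟩⟩
  obtain ⟨⟨E₁, E₂⟩, -, φ, hφ, hφE⟩ :=
    tendsto_subseq_of_bounded (Metric.isBounded_Icc 0 (B, B)) he
  have hφt := hφ.tendsto_atTop
  obtain ⟨m₁, hm₁, hm₁L2, hm₁E, hm₁eq⟩ := exists_memLp_intervalIntegral_mul_eq hT
    (fun k => hfst (φ k)) hφE.fst_nhds (memLp_const 1) (c := fun s => (y s).1 - x.1)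
    fun s hs => by
      simpa only [Pi.one_apply, one_mul, Function.comp_def] using
        (tendsto_intervalIntegral_control_fst hxs (fun n => (hΓ n).1) hy hs).comp hφt
  have hw := hyc.memLp_abs_fst_rpow hν
  obtain ⟨m₂, hm₂, hm₂L2, hm₂E, hm₂eq⟩ := exists_memLp_intervalIntegral_mul_eq hT
    (fun k => hsnd (φ k)) hφE.snd_nhds hw (c := fun s => (y s).2 - x.2)
    fun s hs => (tendsto_intervalIntegral_weight_mul_control_snd hν hS hxs hΓ hy hyc hyS hB
      hs).comp hφt
  refine ⟨fun τ => (m₁ τ, m₂ τ), φ, E₁ + E₂, hφ, ⟨⟨hm₁.prodMk hm₂, ?_, ?_, fun s hs => ?_,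
    fun s hs => ?_, hyS⟩, ?_⟩, ?_, ?_⟩
  · exact (intervalIntegrable_iff_integrableOn_Ioc_of_le hT).2 (hm₁L2.integrable one_le_two)
  · exact (intervalIntegrable_iff_integrableOn_Ioc_of_le hT).2 (hw.integrable_mul hm₂L2)
  · have := hm₁eq s hs
    simp only [one_mul] at this
    linarith
  · linarith [hm₂eq s hs]
  · exact (intervalIntegrable_iff_integrableOn_Ioc_of_le hT).2
      (hm₁L2.integrable_sq.add hm₂L2.integrable_sq)
  · exact (hφE.fst_nhds.add hφE.snd_nhds).congr fun k =>
      (intervalIntegral_sq2_eq_add hT (hfst _) (hsnd _)).symm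
  · exact (intervalIntegral_sq2_eq_add hT hm₁L2 hm₂L2).trans_le (add_le_add hm₁E hm₂E)

theorem tendsto_cost_of_tendstoUniformlyOn {E : ℝ} {l : ℝ × ℝ → ℝ → ℝ} {g : ℝ × ℝ → ℝ}
    (hT : 0 ≤ T) (hS : IsCompact S)
    (hl : ContinuousOn (fun q : (ℝ × ℝ) × ℝ => l q.1 q.2) (S ×ˢ Icc 0 T))
    (hg : ContinuousOn g S) (hΓ : ∀ n, (ys n, as n) ∈ Gamma ν S 0 T (xs n))
    (hy : TendstoUniformlyOn ys y atTop (Icc 0 T)) (hyS : ∀ s ∈ Icc 0 T, y s ∈ S)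
    (hE : Tendsto (fun n => ∫ τ in (0:ℝ)..T, sq2 (as n τ)) atTop (𝓝 E)) :
    Tendsto (fun n => cost l g 0 T (ys n) (as n)) atTop
      (𝓝 (E / 2 + (∫ τ in (0:ℝ)..T, l (y τ) τ) + g (y T))) := by
  have hysS (n : ℕ) := (hΓ n).1.2.2.2.2.2
  have hrun (n : ℕ) := continuousOn_running_cost hl ((hΓ n).1.continuousOn hT) (hysS n)
  have hTmem : T ∈ Icc 0 T := right_mem_Icc.2 hT
  have hlim_run : Tendsto (fun n => ∫ τ in (0:ℝ)..T, l (ys n τ) τ) atTop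
      (𝓝 (∫ τ in (0:ℝ)..T, l (y τ) τ)) := by
    refine TendstoUniformlyOn.tendsto_intervalIntegral_of_continuousOn
      (.of_forall fun n => by rw [uIcc_of_le hT]; exact hrun n) ?_
    rw [uIcc_of_le hT]
    exact UniformContinuousOn.comp_tendstoUniformlyOn_eventually (g := fun q => l q.1 q.2)
      (s := S ×ˢ Icc 0 T) (.of_forall fun n τ hτ => ⟨hysS n τ hτ, hτ⟩)
      (fun τ hτ => ⟨hyS τ hτ, hτ⟩)
      ((hS.prod isCompact_Icc).uniformContinuousOn_of_continuous hl) hy.prodMk_id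
  have hlim_term : Tendsto (fun n => g (ys n T)) atTop (𝓝 (g (y T))) :=
    (hg _ (hyS T hTmem)).tendsto.comp <| tendsto_nhdsWithin_iff.2
      ⟨hy.tendsto_at hTmem, .of_forall fun n => hysS n T hTmem⟩
  exact ((hE.div_const 2).add hlim_run |>.add hlim_term).congr fun n =>
    (cost_eq (hΓ n).2 ((hrun n).intervalIntegrable_of_Icc hT)).symm

end LimitTrajectory

theorem approx_implies_closed_graph_general
    (T ν : ℝ) (hT : 0 < T) (hν : 0 < ν)
    (S : Set (ℝ × ℝ)) (hSc : IsCompact S)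
    (l : ℝ × ℝ → ℝ → ℝ) (g : ℝ × ℝ → ℝ)
    (hl : ContinuousOn (fun q : (ℝ × ℝ) × ℝ => l q.1 q.2) (S ×ˢ Icc 0 T))
    (hg : ContinuousOn g S)
    (x : ℝ × ℝ)
    (hap : ApproxProperty ν S l g 0 T x) :
    ClosedGraphAt ν S l g 0 T x := by
  intro xs ys as y hxsS hxs hopt hy
  have hΓ (n : ℕ) := (hopt n).1
  have hyc : ContinuousOn y (Icc 0 T) :=
    hy.continuousOn (Eventually.of_forall fun n => (hΓ n).1.continuousOn hT.le).frequently
  have hyS : ∀ s ∈ Icc 0 T, y s ∈ S := fun s hs =>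
    hSc.isClosed.mem_of_tendsto (hy.tendsto_at hs) (.of_forall fun n => (hΓ n).1.2.2.2.2.2 s hs)
  obtain ⟨Cl, hCl⟩ := (hSc.prod isCompact_Icc).exists_bound_of_continuousOn hl
  obtain ⟨Cg, hCg⟩ := hSc.exists_bound_of_continuousOn hg
  obtain ⟨α, φ, E, hφ, hαΓ, hE, hαE⟩ := exists_mem_Gamma_of_tendstoUniformlyOn hT.le hν.le hSc
    hxs hΓ hy hyc hyS fun n => GammaOpt.integral_sq2_le hT.le hl hCl hCg (hxsS n) (hopt n)
  refine ⟨α, hαΓ, fun q hq => ?_⟩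
  obtain ⟨zs, bs, hzΓ, -, -, hzcost⟩ := hap q.1 q.2 hq xs hxsS hxs
  have hlim := tendsto_cost_of_tendstoUniformlyOn hT.le hSc hl hg (fun k => hΓ (φ k))
    (fun u hu => hφ.tendsto_atTop.eventually (hy u hu)) hyS hE
  calc cost l g 0 T y α
      = (∫ τ in (0:ℝ)..T, sq2 (α τ)) / 2 + (∫ τ in (0:ℝ)..T, l (y τ) τ) + g (y T) :=
        cost_eq hαΓ.2 ((continuousOn_running_cost hl hyc hyS).intervalIntegrable_of_Icc hT.le)
    _ ≤ E / 2 + (∫ τ in (0:ℝ)..T, l (y τ) τ) + g (y T) := by gcongr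
    _ ≤ cost l g 0 T q.1 q.2 := le_of_tendsto_of_tendsto' hlim (hzcost.comp hφ.tendsto_atTop)
        fun k => (hopt (φ k)).2 _ (hzΓ (φ k))

/-- the approximation property at `x` implies the closed graph property. -/
theorem approx_implies_closed_graph
    (T ν : ℝ) (hT : 0 < T) (hν : 0 < ν)
    (S : Set (ℝ × ℝ)) (hSc : IsCompact S) (hSne : S.Nonempty)
    (l : ℝ × ℝ → ℝ → ℝ) (g : ℝ × ℝ → ℝ)
    (hl : ContinuousOn (fun q : (ℝ × ℝ) × ℝ => l q.1 q.2) (S ×ˢ Icc 0 T))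
    (hg : ContinuousOn g S)
    (x : ℝ × ℝ) (hx : x ∈ S)
    (hap : ApproxProperty ν S l g 0 T x) :
    ClosedGraphAt ν S l g 0 T x :=
  approx_implies_closed_graph_general T ν hT hν S hSc l g hl hg x hap
end
end

section
/- Let ν=1, 0<m₁<m₂, and Σ = {(x₁,x₂) ∈ ℝ² : x₁ ≥ 0, m₁x₁ ≤ x₂ ≤ m₂x₁}. Fix x₀=(x₀₁,x₀₂) ∈ Σ with x₀₁ > 0. Define y(s) = (1 − s/x₀₁)·x₀ for s ∈ [0,x₀₁] and α(s) = (−1, −x₀₂/(x₀₁(x₀₁−s))) for s ∈ [0,x₀₁). Then y ∈ W^{1,1}([0,x₀₁];ℝ²), α is measurable, the pair (y,α) satisfies the Grushin dynamics y₁'(s)=α₁(s), y₂'(s)=|y₁(s)|α₂(s) for a.e. s ∈ [0,x₀₁], y(s) ∈ Σ for all s ∈ [0,x₀₁], y(0)=x₀ and y(x₀₁)=(0,0). In particular, every point of Σ can be joined to the origin by an admissible trajectory. -/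
open MeasureTheory Set Filter Topology

noncomputable section

/-!
The wedge is a cone, so the segment from `x₀` to the origin stays in it. Along the segment
`y₁(s) = x₀₁ - s`, and the control `α₂(s) = -x₀₂ / (x₀₁ (x₀₁ - s))` makes `|y₁| α₂` the constant
`-x₀₂ / x₀₁` off the single time `s = x₀₁` where `α₂` blows up, so `y₂` is affine as well.
The only point of the wedge with `x₁ = 0` is the origin, which is joined to itself by the
trajectory on a degenerate time interval.
-/

theorem starConvex_wedge (m₁ m₂ : ℝ) :
    StarConvex ℝ 0 {p : ℝ × ℝ | 0 ≤ p.1 ∧ m₁ * p.1 ≤ p.2 ∧ p.2 ≤ m₂ * p.1} := by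
  refine starConvex_zero_iff.2 fun p ⟨hp₁, hlo, hhi⟩ c hc _ => ⟨?_, ?_, ?_⟩
  · exact mul_nonneg hc hp₁
  · simpa [mul_left_comm] using mul_le_mul_of_nonneg_left hlo hc
  · simpa [mul_left_comm] using mul_le_mul_of_nonneg_left hhi hc

theorem eq_zero_of_mem_wedge_of_fst_eq_zero {m₁ m₂ : ℝ} {z : ℝ × ℝ}
    (hz : z ∈ {p : ℝ × ℝ | 0 ≤ p.1 ∧ m₁ * p.1 ≤ p.2 ∧ p.2 ≤ m₂ * p.1}) (h : z.1 = 0) :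
    z = 0 := by
  obtain ⟨-, hlo, hhi⟩ := hz
  rw [h, mul_zero] at hlo hhi
  exact Prod.ext h (le_antisymm hhi hlo)

theorem admissible_const_zero_length (ν : ℝ) {S : Set (ℝ × ℝ)} {x : ℝ × ℝ} (hx : x ∈ S) (t : ℝ) :
    Admissible ν S t t x (fun _ => x) 0 := by
  refine ⟨measurable_const, .refl, .refl, ?_, ?_, ?_⟩ <;>
    rintro s ⟨hts, hst⟩ <;> obtain rfl := le_antisymm hst hts <;> simp [hx]

theorem abs_segment_mul_control {x₀ : ℝ × ℝ} (hpos : 0 < x₀.1) {τ : ℝ} (hτ : τ < x₀.1) :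
    |(1 - τ / x₀.1) * x₀.1| ^ (1 : ℝ) * (-x₀.2 / (x₀.1 * (x₀.1 - τ))) = -x₀.2 / x₀.1 := by
  have hgap : 0 < x₀.1 - τ := sub_pos.2 hτ
  rw [Real.rpow_one, one_sub_mul, div_mul_cancel₀ _ hpos.ne', abs_of_pos hgap]
  field_simp

theorem ae_abs_segment_mul_control {x₀ : ℝ × ℝ} (hpos : 0 < x₀.1) {s : ℝ} (hs : s ≤ x₀.1) :
    ∀ᵐ τ ∂volume, τ ∈ uIoc 0 s →
      |(1 - τ / x₀.1) * x₀.1| ^ (1 : ℝ) * (-x₀.2 / (x₀.1 * (x₀.1 - τ))) = -x₀.2 / x₀.1 := by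
  filter_upwards [compl_mem_ae_iff.2 (measure_singleton (μ := volume) x₀.1)] with τ hτ hτs
  exact abs_segment_mul_control hpos (lt_of_le_of_ne (hτs.2.trans (max_le hpos.le hs)) hτ)

theorem admissible_segment_to_origin {S : Set (ℝ × ℝ)} (hS : StarConvex ℝ 0 S)
    {x₀ : ℝ × ℝ} (hx₀ : x₀ ∈ S) (hpos : 0 < x₀.1) :
    Admissible 1 S 0 x₀.1 x₀
      (fun s => ((1 - s / x₀.1) * x₀.1, (1 - s / x₀.1) * x₀.2))
      (fun s => (-1, -x₀.2 / (x₀.1 * (x₀.1 - s)))) := by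
  refine ⟨by fun_prop, intervalIntegrable_const, ?_, fun s _ => ?_, fun s hs => ?_,
    fun s hs => ?_⟩
  · exact intervalIntegrable_const.congr_ae <| (ae_restrict_iff' measurableSet_uIoc).2 <|
      (ae_abs_segment_mul_control hpos le_rfl).mono fun τ h hτ => (h hτ).symm
  · simp only [intervalIntegral.integral_const, smul_eq_mul]
    field_simp
    ring
  · rw [intervalIntegral.integral_congr_ae (ae_abs_segment_mul_control hpos hs.2),
      intervalIntegral.integral_const, smul_eq_mul, sub_zero]
    field_simp
    ring
  · have hc : s / x₀.1 ≤ 1 := (div_le_one hpos).2 hs.2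
    exact starConvex_zero_iff.1 hS hx₀ (by linarith) (by linarith [div_nonneg hs.1 hpos.le])

theorem wedge_explicit_trajectory_general
    (m₁ m₂ : ℝ)
    (x₀ : ℝ × ℝ)
    (hx₀ : x₀ ∈ {p : ℝ × ℝ | 0 ≤ p.1 ∧ m₁ * p.1 ≤ p.2 ∧ p.2 ≤ m₂ * p.1})
    (hpos : 0 < x₀.1) :
    (Admissible 1 {p : ℝ × ℝ | 0 ≤ p.1 ∧ m₁ * p.1 ≤ p.2 ∧ p.2 ≤ m₂ * p.1} 0 x₀.1 x₀
        (fun s => ((1 - s / x₀.1) * x₀.1, (1 - s / x₀.1) * x₀.2))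
        (fun s => (-1, -x₀.2 / (x₀.1 * (x₀.1 - s)))) ∧
      ((1 - (0 : ℝ) / x₀.1) * x₀.1, (1 - (0 : ℝ) / x₀.1) * x₀.2) = x₀ ∧
      ((1 - x₀.1 / x₀.1) * x₀.1, (1 - x₀.1 / x₀.1) * x₀.2) = ((0 : ℝ), (0 : ℝ))) ∧
    ∀ z ∈ {p : ℝ × ℝ | 0 ≤ p.1 ∧ m₁ * p.1 ≤ p.2 ∧ p.2 ≤ m₂ * p.1},
      ∃ δ ≥ (0 : ℝ), ∃ y' α' : ℝ → ℝ × ℝ,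
        Admissible 1 {p : ℝ × ℝ | 0 ≤ p.1 ∧ m₁ * p.1 ≤ p.2 ∧ p.2 ≤ m₂ * p.1} 0 δ z y' α' ∧
        y' δ = ((0 : ℝ), (0 : ℝ)) := by
  have hwedge := starConvex_wedge m₁ m₂
  refine ⟨⟨admissible_segment_to_origin hwedge hx₀ hpos, by simp, by simp [hpos.ne']⟩,
    fun z hz => ?_⟩
  rcases hz.1.eq_or_lt with hz₁ | hz₁
  · exact ⟨0, le_rfl, _, _, admissible_const_zero_length 1 hz 0,
      eq_zero_of_mem_wedge_of_fst_eq_zero hz hz₁.symm⟩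
  · exact ⟨z.1, hz₁.le, _, _, admissible_segment_to_origin hwedge hz hz₁, by simp [hz₁.ne']⟩

/-- in the wedge `Σ = {x₁ ≥ 0, m₁x₁ ≤ x₂ ≤ m₂x₁}` (ν = 1), the explicit
straight-line trajectory joins any point `x₀` of `Σ` to the origin; in particular every
point of `Σ` can be joined to the origin by an admissible trajectory. -/
theorem wedge_explicit_trajectory
    (m₁ m₂ : ℝ) (hm₁ : 0 < m₁) (hm : m₁ < m₂)
    (x₀ : ℝ × ℝ)
    (hx₀ : x₀ ∈ {p : ℝ × ℝ | 0 ≤ p.1 ∧ m₁ * p.1 ≤ p.2 ∧ p.2 ≤ m₂ * p.1})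
    (hpos : 0 < x₀.1) :
    (Admissible 1 {p : ℝ × ℝ | 0 ≤ p.1 ∧ m₁ * p.1 ≤ p.2 ∧ p.2 ≤ m₂ * p.1} 0 x₀.1 x₀
        (fun s => ((1 - s / x₀.1) * x₀.1, (1 - s / x₀.1) * x₀.2))
        (fun s => (-1, -x₀.2 / (x₀.1 * (x₀.1 - s)))) ∧
      ((1 - (0 : ℝ) / x₀.1) * x₀.1, (1 - (0 : ℝ) / x₀.1) * x₀.2) = x₀ ∧
      ((1 - x₀.1 / x₀.1) * x₀.1, (1 - x₀.1 / x₀.1) * x₀.2) = ((0 : ℝ), (0 : ℝ))) ∧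
    ∀ z ∈ {p : ℝ × ℝ | 0 ≤ p.1 ∧ m₁ * p.1 ≤ p.2 ∧ p.2 ≤ m₂ * p.1},
      ∃ δ ≥ (0 : ℝ), ∃ y' α' : ℝ → ℝ × ℝ,
        Admissible 1 {p : ℝ × ℝ | 0 ≤ p.1 ∧ m₁ * p.1 ≤ p.2 ∧ p.2 ≤ m₂ * p.1} 0 δ z y' α' ∧
        y' δ = ((0 : ℝ), (0 : ℝ)) :=
  wedge_explicit_trajectory_general m₁ m₂ x₀ hx₀ hpos
end
end

section
/- Let ν=1, 0<m₁<m₂, and Σ = {(x₁,x₂) ∈ ℝ² : x₁ ≥ 0, m₁x₁ ≤ x₂ ≤ m₂x₁}. Let T>0 and let y ∈ W^{1,1}([0,T];ℝ²) with measurable control α satisfy the Grushin dynamics y₁'(s)=α₁(s), y₂'(s)=|y₁(s)|α₂(s) a.e., with y(s) ∈ Σ for all s ∈ [0,T] and y(0)=x₀=(x₀₁,x₀₂) with x₀₁>0. Then y₂(s) ≥ x₀₂ · exp(−(1/m₁)∫₀^s |α₂(τ)| dτ) for all s ∈ [0,T]. Consequently, if y(T)=(0,0) then ∫₀^T |α₂(τ)|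 dτ = +∞; in particular α ∉ L²(0,T) and the origin is unreachable by admissible trajectories with finite quadratic cost. -/
open MeasureTheory Set Filter Topology

noncomputable section

set_option maxHeartbeats 1000000 in
lemma gronwall_lower (s₀ : ℝ) (hs₀ : 0 ≤ s₀) (u k f : ℝ → ℝ)
    (hf : IntervalIntegrable f volume 0 s₀)
    (hk : IntervalIntegrable k volume 0 s₀)
    (hk0 : ∀ τ ∈ Icc 0 s₀, 0 ≤ k τ)
    (hu0 : ∀ τ ∈ Icc 0 s₀, 0 ≤ u τ)
    (hfk : ∀ τ ∈ Icc 0 s₀, |f τ| ≤ k τ * u τ)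
    (hu : ∀ r ∈ Icc 0 s₀, u r = u 0 + ∫ τ in (0:ℝ)..r, f τ) :
    u 0 * Real.exp (-∫ τ in (0:ℝ)..s₀, k τ) ≤ u s₀ := by
  obtain ⟨c, hc⟩ : ∃ c : ℝ, c = u 0 := ⟨_, rfl⟩
  rcases le_or_gt c 0 with hcle | hcpos
  · have h1 : u 0 * Real.exp (-∫ τ in (0:ℝ)..s₀, k τ) ≤ 0 :=
      mul_nonpos_of_nonpos_of_nonneg (hc ▸ hcle) (Real.exp_nonneg _)
    exact h1.trans (hu0 s₀ ⟨hs₀, le_rfl⟩)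
  obtain ⟨K, hK⟩ : ∃ K : ℝ → ℝ, K = fun r => ∫ τ in (0:ℝ)..r, k τ := ⟨_, rfl⟩
  have hKdef : ∀ r, K r = ∫ τ in (0:ℝ)..r, k τ := fun r => by rw [hK]
  have hIcc : uIcc (0:ℝ) s₀ = Icc 0 s₀ := uIcc_of_le hs₀
  have hfsub : ∀ a b, a ∈ Icc 0 s₀ → b ∈ Icc 0 s₀ → IntervalIntegrable f volume a b :=
    fun a b ha hb => hf.mono_set (by rw [hIcc]; exact uIcc_subset_Icc ha hb)
  have hksub : ∀ a b, a ∈ Icc 0 s₀ → b ∈ Icc 0 s₀ → IntervalIntegrable k volume a b :=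
    fun a b ha hb => hk.mono_set (by rw [hIcc]; exact uIcc_subset_Icc ha hb)
  have hucont : ContinuousOn u (Icc 0 s₀) := by
    have h1 : ContinuousOn (fun r => u 0 + ∫ τ in (0:ℝ)..r, f τ) (Icc 0 s₀) := by
      apply continuousOn_const.add
      have h2 := intervalIntegral.continuousOn_primitive_interval' hf
        (by rw [hIcc]; exact ⟨le_rfl, hs₀⟩)
      rwa [hIcc] at h2
    exact h1.congr hu
  have hKcont : ContinuousOn K (Icc 0 s₀) := by
    rw [hK]
    have h2 := intervalIntegral.continuousOn_primitive_interval' hk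
      (by rw [hIcc]; exact ⟨le_rfl, hs₀⟩)
    rwa [hIcc] at h2
  have hKsub : ∀ a b, a ∈ Icc 0 s₀ → b ∈ Icc 0 s₀ →
      K b - K a = ∫ τ in a..b, k τ := by
    intro a b ha hb
    rw [hKdef a, hKdef b]
    exact intervalIntegral.integral_interval_sub_left
      (hksub 0 b ⟨le_rfl, hs₀⟩ hb) (hksub 0 a ⟨le_rfl, hs₀⟩ ha)
  have hKmono : ∀ a b, a ∈ Icc 0 s₀ → b ∈ Icc 0 s₀ → a ≤ b → K a ≤ K b := by
    intro a b ha hb hab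
    have h0 : (0:ℝ) ≤ ∫ τ in a..b, k τ :=
      intervalIntegral.integral_nonneg hab
        (fun τ hτ => hk0 τ ⟨ha.1.trans hτ.1, hτ.2.trans hb.2⟩)
    linarith [hKsub a b ha hb]
  have hK0 : K 0 = 0 := by rw [hKdef]; simp
  have main : ∀ ε : ℝ, 0 < ε → ε ≤ 1 → ∀ s ∈ Icc 0 s₀,
      (c - ε * c / 2) * Real.exp (-((1 + ε) * K s)) - ε * s ≤ u s := by
    intro ε hε hε1 s hs
    obtain ⟨δ, hδ⟩ : ∃ δ : ℝ, δ = ε * c / 2 := ⟨_, rfl⟩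
    have hδpos : 0 < δ := by rw [hδ]; positivity
    have hδc : δ < c := by rw [hδ]; nlinarith
    obtain ⟨b, hb⟩ : ∃ b : ℝ → ℝ,
        b = fun r => (c - δ) * Real.exp (-((1 + ε) * K r)) - ε * r := ⟨_, rfl⟩
    have hbdef : ∀ r, b r = (c - δ) * Real.exp (-((1 + ε) * K r)) - ε * r :=
      fun r => by rw [hb]
    rw [← hδ, ← hbdef]
    by_contra hcon
    push_neg at hcon
    obtain ⟨E, hE⟩ : ∃ E : Set ℝ, E = {r | r ∈ Icc 0 s₀ ∧ u r ≤ b r} := ⟨_, rfl⟩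
    have hEmem : ∀ r, r ∈ E ↔ r ∈ Icc 0 s₀ ∧ u r ≤ b r := fun r => by rw [hE]; rfl
    have hEne : E.Nonempty := ⟨s, (hEmem s).2 ⟨hs, hcon.le⟩⟩
    have hbcont : ContinuousOn b (Icc 0 s₀) := by
      rw [hb]
      exact (continuousOn_const.mul (Real.continuous_exp.comp_continuousOn
        ((continuousOn_const.mul hKcont).neg))).sub (continuousOn_const.mul continuousOn_id)
    have hEclosed : IsClosed E := by
      have hEeq : E = Icc 0 s₀ ∩ (fun r => u r - b r) ⁻¹' Iic 0 := by
        rw [hE]; ext r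
        simp only [mem_setOf_eq, mem_inter_iff, mem_preimage, mem_Iic, sub_nonpos]
      rw [hEeq]
      exact ContinuousOn.preimage_isClosed_of_isClosed (hucont.sub hbcont)
        isClosed_Icc isClosed_Iic
    have hEbdd : BddBelow E := ⟨0, fun r hr => ((hEmem r).1 hr).1.1⟩
    obtain ⟨t, ht⟩ : ∃ t : ℝ, t = sInf E := ⟨_, rfl⟩
    have htE : t ∈ E := ht ▸ hEclosed.csInf_mem hEne hEbdd
    have htmem : t ∈ Icc 0 s₀ := ((hEmem t).1 htE).1
    have hub : u t ≤ b t := ((hEmem t).1 htE).2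
    have h0notE : (0:ℝ) ∉ E := by
      intro h0
      have h1 : u 0 ≤ b 0 := ((hEmem 0).1 h0).2
      rw [hbdef, hK0] at h1
      simp only [mul_zero, neg_zero, Real.exp_zero, mul_one] at h1
      rw [← hc] at h1
      linarith
    have htpos : 0 < t := lt_of_le_of_ne htmem.1 (by intro h; exact h0notE (h.symm ▸ htE))
    have hbt0 : 0 ≤ b t := le_trans (hu0 t htmem) hub
    obtain ⟨M, hM⟩ : ∃ M : ℝ, M = b t + ε ^ 2 * t / 2 := ⟨_, rfl⟩
    have hMlt : u t < M := by
      have h1 : 0 < ε ^ 2 * t / 2 := by positivity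
      rw [hM]; linarith
    have hcw : ContinuousWithinAt u (Icc 0 s₀) t := hucont t htmem
    have hev : ∀ᶠ τ in nhdsWithin t (Icc 0 s₀), u τ < M :=
      hcw.eventually_lt continuousWithinAt_const hMlt
    rw [Filter.Eventually, Metric.mem_nhdsWithin_iff] at hev
    obtain ⟨ρ, hρ, hball⟩ := hev
    obtain ⟨r, hr⟩ : ∃ r : ℝ, r = max 0 (t - ρ / 2) := ⟨_, rfl⟩
    have hrt : r < t := by rw [hr]; exact max_lt htpos (by linarith)
    have hr0 : 0 ≤ r := by rw [hr]; exact le_max_left _ _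
    have hrmem : r ∈ Icc 0 s₀ := ⟨hr0, hrt.le.trans htmem.2⟩
    have hsmall : ∀ τ ∈ Icc r t, u τ < M := by
      intro τ hτ
      apply hball
      refine ⟨?_, hrmem.1.trans hτ.1, hτ.2.trans htmem.2⟩
      rw [Metric.mem_ball, Real.dist_eq, abs_lt]
      have h1 : t - ρ / 2 ≤ r := hr ▸ le_max_right _ _
      constructor <;> [linarith [hτ.1]; linarith [hτ.2, hρ]]
    have hrE : b r < u r := by
      by_contra hcon2
      push_neg at hcon2
      have h1 : r ∈ E := (hEmem r).2 ⟨hrmem, hcon2⟩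
      exact absurd (ht ▸ csInf_le hEbdd h1) (not_le.mpr hrt)
    have hsubTmem : ∀ τ ∈ Icc r t, τ ∈ Icc 0 s₀ :=
      fun τ hτ => ⟨hrmem.1.trans hτ.1, hτ.2.trans htmem.2⟩
    have hut : u t - u r = ∫ τ in r..t, f τ := by
      rw [hu t htmem, hu r hrmem,
        ← intervalIntegral.integral_interval_sub_left (hfsub 0 t ⟨le_rfl, hs₀⟩ htmem)
          (hfsub 0 r ⟨le_rfl, hs₀⟩ hrmem)]
      ring
    have hMnonneg : 0 ≤ M := by
      have h1 : 0 ≤ ε ^ 2 * t / 2 := by positivity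
      rw [hM]; linarith
    have hbound : -(M * (K t - K r)) ≤ u t - u r := by
      rw [hut, hKsub r t hrmem htmem, ← intervalIntegral.integral_const_mul,
        ← intervalIntegral.integral_neg]
      apply intervalIntegral.integral_mono_on hrt.le
        (((hksub r t hrmem htmem).const_mul M).neg) (hfsub r t hrmem htmem)
      intro τ hτ
      show -(M * k τ) ≤ f τ
      have h1 : |f τ| ≤ k τ * u τ := hfk τ (hsubTmem τ hτ)
      have h2 : k τ * u τ ≤ k τ * M :=
        mul_le_mul_of_nonneg_left (hsmall τ hτ).le (hk0 τ (hsubTmem τ hτ))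
      have h3 := neg_abs_le (f τ)
      have h4 : M * k τ = k τ * M := mul_comm _ _
      linarith
    obtain ⟨ΔK, hΔK⟩ : ∃ d : ℝ, d = K t - K r := ⟨_, rfl⟩
    have hΔK0 : 0 ≤ ΔK := by
      have h1 := hKmono r t hrmem htmem hrt.le
      rw [hΔK]; linarith
    obtain ⟨β, hβ⟩ : ∃ β : ℝ, β = (c - δ) * Real.exp (-((1 + ε) * K t)) := ⟨_, rfl⟩
    have hβpos : 0 < β := hβ ▸ mul_pos (by linarith) (Real.exp_pos _)
    have hbt : b t = β - ε * t := by rw [hbdef, hβ]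
    have hexp : b r - b t ≥ (1 + ε) * β * ΔK + ε * (t - r) := by
      have h1 : Real.exp (-((1 + ε) * K r))
          = Real.exp (-((1 + ε) * K t)) * Real.exp ((1 + ε) * ΔK) := by
        rw [← Real.exp_add]; congr 1; rw [hΔK]; ring
      have h2 : (1 + ε) * ΔK + 1 ≤ Real.exp ((1 + ε) * ΔK) := Real.add_one_le_exp _
      have h3 : 0 < Real.exp (-((1 + ε) * K t)) := Real.exp_pos _
      have h4 : 0 ≤ (1 + ε) * ΔK := by nlinarith
      have h5 : 0 < (c - δ) * Real.exp (-((1 + ε) * K t)) := mul_pos (by linarith) h3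
      have h6 : ((c - δ) * Real.exp (-((1 + ε) * K t))) * ((1 + ε) * ΔK + 1)
          ≤ ((c - δ) * Real.exp (-((1 + ε) * K t))) * Real.exp ((1 + ε) * ΔK) :=
        mul_le_mul_of_nonneg_left h2 h5.le
      rw [hbdef r, hbdef t, h1, hβ]
      nlinarith [h6]
    have hchain : M * ΔK > b r - b t := by
      rw [← hΔK] at hbound
      linarith
    have hcoef : (1 + ε) * β - M ≥ ε * t / 2 := by
      rw [hM, hbt]
      have h7 : 0 ≤ ε * (1 - ε) * t := mul_nonneg (mul_nonneg hε.le (by linarith)) htpos.le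
      have h8 := mul_pos hε hβpos
      linarith
    have h9 : 0 ≤ (1 + ε) * β - M := le_trans (by positivity) hcoef
    have h10 := mul_nonneg h9 hΔK0
    have h11 := mul_pos hε (show (0:ℝ) < t - r by linarith)
    nlinarith [h10, h11, hchain, hexp]
  have hs₀mem : s₀ ∈ Icc (0:ℝ) s₀ := ⟨hs₀, le_rfl⟩
  obtain ⟨F, hF⟩ : ∃ F : ℝ → ℝ,
      F = fun ε => (c - ε * c / 2) * Real.exp (-((1 + ε) * K s₀)) - ε * s₀ := ⟨_, rfl⟩
  have hFcont : Continuous F := by rw [hF]; fun_prop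
  have hFt : Tendsto F (nhdsWithin 0 (Ioi 0)) (nhds (F 0)) :=
    (hFcont.tendsto 0).mono_left nhdsWithin_le_nhds
  have hF0 : F 0 = c * Real.exp (-K s₀) := by rw [hF]; norm_num
  have hev2 : ∀ᶠ ε in nhdsWithin 0 (Ioi (0:ℝ)), F ε ≤ u s₀ := by
    filter_upwards [Ioo_mem_nhdsGT_of_mem (by norm_num : (0:ℝ) ∈ Ico (0:ℝ) 1)] with ε hε
    rw [hF]
    exact main ε hε.1 hε.2.le s₀ hs₀mem
  have hfin := le_of_tendsto hFt hev2
  rw [hF0, hc, hKdef] at hfin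
  exact hfin

set_option maxHeartbeats 1000000 in
/-- Gronwall estimate in the wedge and unreachability of the origin with
finite quadratic cost (ν = 1). -/
theorem wedge_gronwall_unreachable
    (m₁ m₂ T : ℝ) (hm₁ : 0 < m₁) (hm : m₁ < m₂) (hT : 0 < T)
    (y α : ℝ → ℝ × ℝ)
    (hadm : Admissible 1 {p : ℝ × ℝ | 0 ≤ p.1 ∧ m₁ * p.1 ≤ p.2 ∧ p.2 ≤ m₂ * p.1}
      0 T (y 0) y α)
    (hpos : 0 < (y 0).1) :
    (∀ s ∈ Icc (0 : ℝ) T,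
      IntervalIntegrable (fun τ => |(α τ).2|) volume 0 s →
        (y 0).2 * Real.exp (-(1 / m₁) * ∫ τ in (0 : ℝ)..s, |(α τ).2|) ≤ (y s).2) ∧
    (y T = ((0 : ℝ), (0 : ℝ)) →
      (∫⁻ τ in Ioc (0 : ℝ) T, ENNReal.ofReal |(α τ).2| = ⊤) ∧ ¬ InL2 α 0 T) := by
  obtain ⟨hαmeas, hint1, hint2, h4, h5, hS⟩ := hadm
  have part1 : ∀ s ∈ Icc (0 : ℝ) T,
      IntervalIntegrable (fun τ => |(α τ).2|) volume 0 s →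
        (y 0).2 * Real.exp (-(1 / m₁) * ∫ τ in (0 : ℝ)..s, |(α τ).2|) ≤ (y s).2 := by
    intro s hs hα2
    have hsubIcc : Icc (0:ℝ) s ⊆ Icc 0 T := Icc_subset_Icc le_rfl hs.2
    have key := gronwall_lower s hs.1 (fun τ => (y τ).2) (fun τ => |(α τ).2| / m₁)
      (fun τ => |(y τ).1| ^ (1:ℝ) * (α τ).2)
      (hint2.mono_set (by rw [uIcc_of_le hs.1, uIcc_of_le hT.le]; exact hsubIcc))
      (hα2.div_const m₁)
      (fun τ _ => div_nonneg (abs_nonneg _) hm₁.le)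
      (fun τ hτ => by
        have h1 := hS τ (hsubIcc hτ)
        have h2 := mul_nonneg hm₁.le h1.1
        exact h2.trans h1.2.1)
      (fun τ hτ => by
        have h1 := hS τ (hsubIcc hτ)
        simp only [Real.rpow_one, abs_mul, abs_abs]
        rw [abs_of_nonneg h1.1]
        have h2 : (y τ).1 ≤ (y τ).2 / m₁ := (le_div_iff₀ hm₁).2 (by linarith [h1.2.1])
        calc (y τ).1 * |(α τ).2| ≤ ((y τ).2 / m₁) * |(α τ).2| :=
              mul_le_mul_of_nonneg_right h2 (abs_nonneg _)
          _ = |(α τ).2| / m₁ * (y τ).2 := by ring)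
      (fun r hr => h5 r (hsubIcc hr))
    have heq : -(1 / m₁) * ∫ τ in (0:ℝ)..s, |(α τ).2|
        = -∫ τ in (0:ℝ)..s, |(α τ).2| / m₁ := by
      rw [intervalIntegral.integral_div]; ring
    rw [heq]
    exact key
  refine ⟨part1, fun hyT => ?_⟩
  have hy20 : 0 < (y 0).2 := by
    have h1 := hS 0 ⟨le_rfl, hT.le⟩
    exact lt_of_lt_of_le (mul_pos hm₁ hpos) h1.2.1
  have hmeas2 : Measurable fun τ => |(α τ).2| := hαmeas.snd.abs
  have htop : ∫⁻ τ in Ioc (0 : ℝ) T, ENNReal.ofReal |(α τ).2| = ⊤ := by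
    by_contra hne
    have hfin : HasFiniteIntegral (fun τ => |(α τ).2|) (volume.restrict (Ioc (0:ℝ) T)) := by
      rw [hasFiniteIntegral_iff_ofReal (ae_of_all _ fun τ => abs_nonneg _)]
      exact lt_top_iff_ne_top.2 hne
    have hInt : IntegrableOn (fun τ => |(α τ).2|) (Ioc (0:ℝ) T) volume :=
      ⟨hmeas2.aestronglyMeasurable.restrict, hfin⟩
    have hII : IntervalIntegrable (fun τ => |(α τ).2|) volume 0 T :=
      (intervalIntegrable_iff_integrableOn_Ioc_of_le hT.le).2 hInt
    have hp := part1 T ⟨hT.le, le_rfl⟩ hII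
    rw [hyT] at hp
    simp only at hp
    nlinarith [Real.exp_pos (-(1 / m₁) * ∫ τ in (0:ℝ)..T, |(α τ).2|)]
  refine ⟨htop, fun hL2 => ?_⟩
  have hL2' : IntegrableOn (fun τ => sq2 (α τ)) (Ioc (0:ℝ) T) volume :=
    (intervalIntegrable_iff_integrableOn_Ioc_of_le hT.le).1 hL2
  have hg : IntegrableOn (fun τ => (1 + sq2 (α τ)) / 2) (Ioc (0:ℝ) T) volume :=
    ((integrable_const 1).add hL2').div_const 2
  have hInt : IntegrableOn (fun τ => |(α τ).2|) (Ioc (0:ℝ) T) volume := by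
    apply Integrable.mono' hg hmeas2.aestronglyMeasurable.restrict
    apply ae_of_all
    intro τ
    rw [Real.norm_eq_abs, abs_abs]
    have h1 : (|(α τ).2| - 1) ^ 2 ≥ 0 := sq_nonneg _
    have h2 : sq2 (α τ) = (α τ).1 ^ 2 + (α τ).2 ^ 2 := rfl
    have h3 : (α τ).2 ^ 2 = |(α τ).2| ^ 2 := (sq_abs _).symm
    nlinarith [sq_nonneg (α τ).1]
  have hfin := hInt.2
  rw [hasFiniteIntegral_iff_ofReal (ae_of_all _ fun τ => abs_nonneg _)] at hfin
  rw [htop] at hfin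
  exact lt_irrefl _ hfin
end
end
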